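/- In a J-category, the abstract topological complexity TC(B), defined as secat of the diagonal Δ_F : F → F × F for any F-factorization B →~ F ↠ 0, is well-defined: it does not depend on the choice of e-fibrant replacement F, and it is invariant under weak equivalence of objects, i.e. if B and B' are weakly equivalent then TC(B) = TC(B'). -/

import Mathlib

open CategoryTheory CategoryTheory.Limits ZeroObject

universe v u v' u'

variable (C : Type u) [Category.{v} C] [HasZeroObject C] [HasZeroMorphisms C]

/-- A category satisfying axioms (J1)-(J4) of Doeraene's J-categories:
a pointed category with fibrations, cofibrations and weak equivalences. -/
structure PreJCat where
  fib : MorphismProperty C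
  cofib : MorphismProperty C
  weq : MorphismProperty C
  /-- (J1) isomorphisms are trivial cofibrations -/
  iso_triv_cofib : ∀ {X Y : C} (f : X ⟶ Y), IsIso f → cofib f ∧ weq f
  /-- (J1) isomorphisms are trivial fibrations -/
  iso_triv_fib : ∀ {X Y : C} (f : X ⟶ Y), IsIso f → fib f ∧ weq f
  fib_comp : ∀ {X Y Z : C} {f : X ⟶ Y} {g : Y ⟶ Z}, fib f → fib g → fib (f ≫ g)
  cofib_comp : ∀ {X Y Z : C} {f : X ⟶ Y} {g : Y ⟶ Z}, cofib f → cofib g → cofib (f ≫ g)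
  /-- (J1) two-out-of-three for weak equivalences -/
  weq_comp : ∀ {X Y Z : C} {f : X ⟶ Y} {g : Y ⟶ Z}, weq f → weq g → weq (f ≫ g)
  weq_of_comp_left : ∀ {X Y Z : C} {f : X ⟶ Y} {g : Y ⟶ Z}, weq g → weq (f ≫ g) → weq f
  weq_of_comp_right : ∀ {X Y Z : C} {f : X ⟶ Y} {g : Y ⟶ Z}, weq f → weq (f ≫ g) → weq g
  /-- (J2) pullbacks of fibrations exist, and the base extension is a fibration -/
  pb_exists : ∀ {E B B' : C} (p : E ⟶ B) (f : B' ⟶ B), fib p →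
    ∃ (P : C) (fb : P ⟶ E) (pb : P ⟶ B'), IsPullback fb pb p f ∧ fib pb
  /-- (J2) base extensions of weak equivalences along fibrations are weak equivalences -/
  pb_weq : ∀ {E B B' P : C} {p : E ⟶ B} {f : B' ⟶ B} {fb : P ⟶ E} {pb : P ⟶ B'},
    fib p → IsPullback fb pb p f → (weq f → weq fb) ∧ (weq p → weq pb)
  /-- (J2) dual: pushouts of cofibrations exist -/
  po_exists : ∀ {A X Y : C} (i : A ⟶ X) (g : A ⟶ Y), cofib i →
    ∃ (Q : C) (inl : X ⟶ Q) (inr : Y ⟶ Q), IsPushout i g inl inr ∧ cofib inr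
  po_weq : ∀ {A X Y Q : C} {i : A ⟶ X} {g : A ⟶ Y} {inl : X ⟶ Q} {inr : Y ⟶ Q},
    cofib i → IsPushout i g inl inr → (weq g → weq inl) ∧ (weq i → weq inr)
  /-- (J3) F-factorizations exist -/
  F_fac : ∀ {X Y : C} (f : X ⟶ Y), ∃ (Z : C) (τ : X ⟶ Z) (q : Z ⟶ Y),
    weq τ ∧ fib q ∧ τ ≫ q = f
  /-- (J3) C-factorizations exist -/
  C_fac : ∀ {X Y : C} (f : X ⟶ Y), ∃ (Z : C) (i : X ⟶ Z) (σ : Z ⟶ Y),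
    cofib i ∧ weq σ ∧ i ≫ σ = f
  /-- (J4) cofibrant replacements exist -/
  cof_replace : ∀ X : C, ∃ (Xb : C) (q : Xb ⟶ X), fib q ∧ weq q ∧
    (∀ {E : C} (p : E ⟶ Xb), fib p → weq p → ∃ s : Xb ⟶ E, s ≫ p = 𝟙 Xb)

variable {C}

namespace PreJCat

/-- An object is a cofibrant model if every trivial fibration onto it admits a section. -/
def CofModel (P : PreJCat C) (X : C) : Prop :=
  ∀ {E : C} (p : E ⟶ X), P.fib p → P.weq p → ∃ s : X ⟶ E, s ≫ p = 𝟙 X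

/-- An object is e-fibrant if the morphism to the zero object is a fibration. -/
def EFibrant (P : PreJCat C) (X : C) : Prop := P.fib (0 : X ⟶ 0)

/-- `f` admits a weak lifting along `g` (all objects being cofibrant models). -/
def WeakLifting (P : PreJCat C) {A B Cc : C} (f : A ⟶ B) (g : Cc ⟶ B) : Prop :=
  ∃ (E : C) (τ : Cc ⟶ E) (q : E ⟶ B), P.weq τ ∧ P.fib q ∧ τ ≫ q = g ∧
    ∃ s : A ⟶ E, s ≫ q = f

/-- `g` admits a weak section. -/
def HasWeakSection (P : PreJCat C) {E B : C} (g : E ⟶ B) : Prop :=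
  P.WeakLifting (𝟙 B) g

/-- `j : J ⟶ B` is a join morphism of `f : A ⟶ B` and `g : Cc ⟶ B`: built from an
F-factorization of `g`, a pullback, a C-factorization and a pushout. -/
def IsJoin (P : PreJCat C) {A Cc B J : C} (f : A ⟶ B) (g : Cc ⟶ B) (j : J ⟶ B) : Prop :=
  ∃ (E : C) (τ : Cc ⟶ E) (q : E ⟶ B), P.weq τ ∧ P.fib q ∧ τ ≫ q = g ∧
  ∃ (E' Z : C) (fbar : E' ⟶ E) (pbar : E' ⟶ A) (i : E' ⟶ Z) (σ : Z ⟶ E)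
    (a : A ⟶ J) (bz : Z ⟶ J),
    IsPullback fbar pbar q f ∧ P.cofib i ∧ P.weq σ ∧ i ≫ σ = fbar ∧
    IsPushout pbar i a bz ∧ a ≫ j = f ∧ bz ≫ j = σ ≫ q

/-- `IsIterJoin P p n h` : `h` is an `n`-th iterated join morphism `*ⁿ_B E ⟶ B` of `p`. -/
inductive IsIterJoin (P : PreJCat C) {E B : C} (p : E ⟶ B) : ℕ → ∀ {X : C}, (X ⟶ B) → Prop
  | zero : IsIterJoin P p 0 p
  | succ {n : ℕ} {X Y : C} {h : X ⟶ B} {h' : Y ⟶ B} :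
      IsIterJoin P p n h → P.IsJoin h p h' → IsIterJoin P p (n + 1) h'

/-- The Ganea-type sectional category of a morphism. -/
noncomputable def Gsecat (P : PreJCat C) {E B : C} (p : E ⟶ B) : ℕ∞ :=
  sInf {n : ℕ∞ | ∃ m : ℕ, n = (m : ℕ∞) ∧
    ∃ (X : C) (h : X ⟶ B), P.IsIterJoin p m h ∧ P.HasWeakSection h}

end PreJCat

/-- `p1, p2` exhibit `Pd` as a binary product of `X` and `Y`. -/
def IsBinProd {X Y Pd : C} (p1 : Pd ⟶ X) (p2 : Pd ⟶ Y) : Prop :=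
  Nonempty (IsLimit (BinaryFan.mk p1 p2))

namespace PreJCat

/-- `IsFatWedge P p n j Δ` : `j : Tⁿ(p) ⟶ B^{n+1}` is an `n`-th fat wedge morphism of `p`
together with the diagonal `Δ : B ⟶ B^{n+1}`. -/
inductive IsFatWedge (P : PreJCat C) {E B : C} (p : E ⟶ B) :
    ℕ → ∀ {T Pw : C}, (T ⟶ Pw) → (B ⟶ Pw) → Prop
  | zero : IsFatWedge P p 0 p (𝟙 B)
  | succ {n : ℕ} {T Pn : C} {j : T ⟶ Pn} {Δ : B ⟶ Pn}
      (hprev : IsFatWedge P p n j Δ)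
      {Pn1 : C} {pr1 : Pn1 ⟶ Pn} {pr2 : Pn1 ⟶ B} (hP : IsBinProd pr1 pr2)
      {TB : C} {q1 : TB ⟶ T} {q2 : TB ⟶ B} (hTB : IsBinProd q1 q2)
      {PE : C} {r1 : PE ⟶ Pn} {r2 : PE ⟶ E} (hPE : IsBinProd r1 r2)
      {jB : TB ⟶ Pn1} (hjB : jB ≫ pr1 = q1 ≫ j ∧ jB ≫ pr2 = q2)
      {pP : PE ⟶ Pn1} (hpP : pP ≫ pr1 = r1 ∧ pP ≫ pr2 = r2 ≫ p)
      {Tn1 : C} {j' : Tn1 ⟶ Pn1} (hjoin : P.IsJoin jB pP j')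
      {Δ' : B ⟶ Pn1} (hΔ : Δ' ≫ pr1 = Δ ∧ Δ' ≫ pr2 = 𝟙 B) :
      IsFatWedge P p (n + 1) j' Δ'

/-- The Whitehead-type sectional category of a morphism with e-fibrant codomain. -/
noncomputable def WsecatE (P : PreJCat C) {E B : C} (p : E ⟶ B) : ℕ∞ :=
  sInf {n : ℕ∞ | ∃ m : ℕ, n = (m : ℕ∞) ∧
    ∃ (T Pw : C) (j : T ⟶ Pw) (Δ : B ⟶ Pw), P.IsFatWedge p m j Δ ∧ P.WeakLifting Δ j}

/-- The Whitehead-type sectional category of an arbitrary morphism, via e-fibrant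
replacements of the codomain. -/
noncomputable def Wsecat (P : PreJCat C) {E B : C} (p : E ⟶ B) : ℕ∞ :=
  ⨅ (F : C) (τ : B ⟶ F) (_ : P.weq τ ∧ P.EFibrant F), P.WsecatE (p ≫ τ)

/-- A commutative square is a homotopy pullback. -/
def IsHPB (P : PreJCat C) {D A Cc B : C} (f' : D ⟶ Cc) (g' : D ⟶ A)
    (g : Cc ⟶ B) (f : A ⟶ B) : Prop :=
  f' ≫ g = g' ≫ f ∧ ∃ (E : C) (τ : Cc ⟶ E) (q : E ⟶ B), P.weq τ ∧ P.fib q ∧ τ ≫ q = g ∧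
    ∃ (Pt : C) (pr1 : Pt ⟶ E) (pr2 : Pt ⟶ A), IsPullback pr1 pr2 q f ∧
      ∃ w : D ⟶ Pt, P.weq w ∧ w ≫ pr1 = f' ≫ τ ∧ w ≫ pr2 = g'

/-- A commutative square is a homotopy pushout. -/
def IsHPO (P : PreJCat C) {A B Cc D : C} (f : A ⟶ B) (g : A ⟶ Cc)
    (i' : B ⟶ D) (j' : Cc ⟶ D) : Prop :=
  f ≫ i' = g ≫ j' ∧ ∃ (Z : C) (i : A ⟶ Z) (σ : Z ⟶ B), P.cofib i ∧ P.weq σ ∧ i ≫ σ = f ∧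
    ∃ (Q : C) (inl : Z ⟶ Q) (inr : Cc ⟶ Q), IsPushout i g inl inr ∧
      ∃ w : Q ⟶ D, P.weq w ∧ inl ≫ w = σ ≫ i' ∧ inr ≫ w = j'

/-- `A-A'-B'-B` is a weak pullback over `b : B ⟶ B'` (all objects cofibrant models). -/
def IsWeakPullback (P : PreJCat C) {A B A' B' : C}
    (f : A ⟶ B) (f' : A' ⟶ B') (b : B ⟶ B') : Prop :=
  ∃ (X : C) (τ : A' ⟶ X) (q : X ⟶ B'), P.weq τ ∧ P.fib q ∧ τ ≫ q = f' ∧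
    ∃ x : A ⟶ X, P.IsHPB x f q b

/-- `g : G ⟶ B` is an `n`-th Ganea map of `B`: the `n`-th iterated join of `0 ⟶ B`. -/
def IsGaneaMap (P : PreJCat C) (B : C) (n : ℕ) {G : C} (g : G ⟶ B) : Prop :=
  P.IsIterJoin (0 : (0 : C) ⟶ B) n g

/-- The Lusternik-Schnirelmann category of an object. -/
noncomputable def catObj (P : PreJCat C) (B : C) : ℕ∞ :=
  sInf {n : ℕ∞ | ∃ m : ℕ, n = (m : ℕ∞) ∧
    ∃ (G : C) (g : G ⟶ B), P.IsGaneaMap B m g ∧ P.HasWeakSection g}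

/-- The Lusternik-Schnirelmann category of a morphism `b : B ⟶ B'`:
least `n` such that `b` admits a weak lifting along the `n`-th Ganea map of `B'`. -/
noncomputable def catMor (P : PreJCat C) {B B' : C} (b : B ⟶ B') : ℕ∞ :=
  sInf {n : ℕ∞ | ∃ m : ℕ, n = (m : ℕ∞) ∧
    ∃ (G : C) (g : G ⟶ B'), P.IsGaneaMap B' m g ∧ P.WeakLifting b g}

/-- One step of a zigzag: a weak equivalence of morphisms in the arrow category. -/
def MorWeqStep (P : PreJCat C) (u v : Arrow C) : Prop :=
  ∃ h : u ⟶ v, P.weq h.left ∧ P.weq h.right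

/-- Two morphisms are weakly equivalent: joined by a finite zigzag of weak
equivalences of morphisms. -/
def WeaklyEquivMor (P : PreJCat C) (u v : Arrow C) : Prop :=
  Relation.EqvGen P.MorWeqStep u v

def ObjWeqStep (P : PreJCat C) (X Y : C) : Prop := ∃ f : X ⟶ Y, P.weq f

/-- Two objects are weakly equivalent: joined by a finite zigzag of weak equivalences. -/
def WeaklyEquivObj (P : PreJCat C) (X Y : C) : Prop :=
  Relation.EqvGen P.ObjWeqStep X Y

/-- The abstract topological complexity of an e-fibrant object:
the sectional category of the diagonal `B ⟶ B × B`. -/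
noncomputable def TCE (P : PreJCat C) (B : C) : ℕ∞ :=
  ⨅ (Pd : C) (p1 : Pd ⟶ B) (p2 : Pd ⟶ B) (_ : IsBinProd p1 p2)
    (Δ : B ⟶ Pd) (_ : Δ ≫ p1 = 𝟙 B ∧ Δ ≫ p2 = 𝟙 B), P.Gsecat Δ

/-- The abstract topological complexity of an arbitrary object, via e-fibrant
replacements. -/
noncomputable def TC (P : PreJCat C) (B : C) : ℕ∞ :=
  ⨅ (F : C) (τ : B ⟶ F) (_ : P.weq τ ∧ P.EFibrant F), P.TCE F

end PreJCat

variable (C)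

/-- A J-category: (J1)-(J4) together with the cube axiom (J5). -/
structure JCat extends PreJCat C where
  /-- (J5) the cube axiom: in a commutative cube whose bottom face is a homotopy
  pushout and whose vertical faces are homotopy pullbacks, the top face is a
  homotopy pushout. -/
  cube : ∀ {X00 X01 X10 X11 Y00 Y01 Y10 Y11 : C}
    {tf : X00 ⟶ X01} {tg : X00 ⟶ X10} {ti : X01 ⟶ X11} {tj : X10 ⟶ X11}
    {bf : Y00 ⟶ Y01} {bg : Y00 ⟶ Y10} {bi : Y01 ⟶ Y11} {bj : Y10 ⟶ Y11}
    {v00 : X00 ⟶ Y00} {v01 : X01 ⟶ Y01} {v10 : X10 ⟶ Y10} {v11 : X11 ⟶ Y11},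
    tf ≫ ti = tg ≫ tj →
    toPreJCat.IsHPO bf bg bi bj →
    toPreJCat.IsHPB tf v00 v01 bf →
    toPreJCat.IsHPB tg v00 v10 bg →
    toPreJCat.IsHPB ti v01 v11 bi →
    toPreJCat.IsHPB tj v10 v11 bj →
    toPreJCat.IsHPO tf tg ti tj

variable {C}

/-- A modelization functor: preserves weak equivalences, homotopy pullbacks and
homotopy pushouts. -/
structure ModelizationFunctor {D : Type u'} [Category.{v'} D] [HasZeroObject D]
    [HasZeroMorphisms D] (P : PreJCat C) (Q : PreJCat D) where
  F : C ⥤ D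
  map_weq : ∀ {X Y : C} (f : X ⟶ Y), P.weq f → Q.weq (F.map f)
  map_hpb : ∀ {Dd A Cc B : C} {f' : Dd ⟶ Cc} {g' : Dd ⟶ A} {g : Cc ⟶ B} {f : A ⟶ B},
    P.IsHPB f' g' g f → Q.IsHPB (F.map f') (F.map g') (F.map g) (F.map f)
  map_hpo : ∀ {A B Cc Dd : C} {f : A ⟶ B} {g : A ⟶ Cc} {i' : B ⟶ Dd} {j' : Cc ⟶ Dd},
    P.IsHPO f g i' j' → Q.IsHPO (F.map f) (F.map g) (F.map i') (F.map j')

/-!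
Any two e-fibrant replacements `F`, `F'` of `B` are linked by a weak equivalence `h : F' ⟶ F`
(a section of a trivial fibration onto the cofibrant model `F'`, followed by a projection), and
`h × h` is a weak equivalence, being the composite of two base changes of `h` along product
projections, which are fibrations since `F` and `F'` are e-fibrant. So the diagonals of `F'` and
`F` are weakly equivalent morphisms, and the sectional category is invariant under weak
equivalence of morphisms: by induction, every iterated join of `Δ_F` is linked to an iterated
join of `Δ_F'` by a cospan of weak equivalences, built from a common C-factorization and the
Gluing Lemma (a consequence of the cube axiom), and weak sections transfer along such cospans.
Finally, an e-fibrant replacement of `B'` precomposed with a weak equivalence `B ⟶ B'` is one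
of `B`, so `TC B = TC B'`.
-/

namespace PreJCat

section

omit [HasZeroObject C] [HasZeroMorphisms C]

variable (P : PreJCat C)

lemma weq_id (X : C) : P.weq (𝟙 X) :=
  (P.iso_triv_fib (𝟙 X) inferInstance).2

variable {P}

lemma fib_of_isPullback {E B B' Q : C} {p : E ⟶ B} {f : B' ⟶ B} {fb : Q ⟶ E} {pb : Q ⟶ B'}
    (hp : P.fib p) (h : IsPullback fb pb p f) : P.fib pb := by
  obtain ⟨Q₂, fb₂, pb₂, h₂, hf₂⟩ := P.pb_exists p f hp
  rw [← h₂.isoIsPullback_inv_snd _ _ h]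
  exact P.fib_comp (P.iso_triv_fib _ inferInstance).1 hf₂

lemma cofib_of_isPushout {A X Y Q : C} {i : A ⟶ X} {g : A ⟶ Y} {inl : X ⟶ Q} {inr : Y ⟶ Q}
    (hi : P.cofib i) (h : IsPushout i g inl inr) : P.cofib inr := by
  obtain ⟨Q₂, inl₂, inr₂, h₂, hc₂⟩ := P.po_exists i g hi
  rw [← h₂.inr_isoIsPushout_hom _ _ h]
  exact P.cofib_comp hc₂ (P.iso_triv_cofib _ inferInstance).1

lemma exists_section_of_fib_factorizations {X B E₁ E₂ : C} (hE₁ : P.CofModel E₁)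
    {τ₁ : X ⟶ E₁} {q₁ : E₁ ⟶ B} {τ₂ : X ⟶ E₂} {q₂ : E₂ ⟶ B}
    (hτ₁ : P.weq τ₁) (hq₂ : P.fib q₂)
    (hfac : τ₁ ≫ q₁ = τ₂ ≫ q₂) {s₁ : B ⟶ E₁} (hs₁ : s₁ ≫ q₁ = 𝟙 B) :
    ∃ s₂ : B ⟶ E₂, s₂ ≫ q₂ = 𝟙 B := by
  obtain ⟨W, w₂, w₁, hW, hw₁⟩ := P.pb_exists q₂ q₁ hq₂
  obtain ⟨N, t, r, ht, hr, htr⟩ := P.F_fac (hW.lift τ₂ τ₁ hfac.symm)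
  have hrw₁ : P.weq (r ≫ w₁) :=
    P.weq_of_comp_right ht (by rwa [← Category.assoc, htr, hW.lift_snd])
  obtain ⟨s, hs⟩ := hE₁ (r ≫ w₁) (P.fib_comp hr hw₁) hrw₁
  refine ⟨s₁ ≫ s ≫ r ≫ w₂, ?_⟩
  calc (s₁ ≫ s ≫ r ≫ w₂) ≫ q₂ = s₁ ≫ (s ≫ r ≫ w₁) ≫ q₁ := by simp only [Category.assoc, hW.w]
    _ = 𝟙 B := by rw [hs, Category.id_comp, hs₁]

lemma HasWeakSection.of_comp (hc : ∀ X : C, P.CofModel X) {X Y B : C} {z : X ⟶ Y}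
    {d : Y ⟶ B} (hj : P.HasWeakSection (z ≫ d)) : P.HasWeakSection d := by
  obtain ⟨E, τ, q, hτ, _, hτq, s, hs⟩ := hj
  obtain ⟨E₂, τ₂, q₂, hτ₂, hq₂, hτq₂⟩ := P.F_fac d
  obtain ⟨s₂, hs₂⟩ := exists_section_of_fib_factorizations (hc E) hτ hq₂
    (by rw [hτq, Category.assoc, hτq₂]) hs
  exact ⟨E₂, τ₂, q₂, hτ₂, hq₂, hτq₂, s₂, hs₂⟩

lemma HasWeakSection.of_weq_square {X X' B B' : C} {x : X' ⟶ X} {H : B' ⟶ B} {j : X ⟶ B}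
    {j' : X' ⟶ B'} (hx : P.weq x) (hH : P.weq H) (hsq : x ≫ j = j' ≫ H)
    (hj : P.HasWeakSection j) : P.HasWeakSection j' := by
  obtain ⟨E, τ, q, hτ, hq, hτq, s, hs⟩ := hj
  obtain ⟨E', k, q', hE', hq'⟩ := P.pb_exists q H hq
  have hk : P.weq k := (P.pb_weq hq hE').1 hH
  refine ⟨E', hE'.lift (x ≫ τ) j' (by rw [Category.assoc, hτq, hsq]), q', ?_, hq',
    hE'.lift_snd _ _ _,
    hE'.lift (H ≫ s) (𝟙 B') (by rw [Category.assoc, hs, Category.comp_id, Category.id_comp]),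
    hE'.lift_snd _ _ _⟩
  exact P.weq_of_comp_left hk (by rw [hE'.lift_fst]; exact P.weq_comp hx hτ)

lemma isHPB_of_weq {D A Cc B : C} {f' : D ⟶ Cc} {g' : D ⟶ A} {g : Cc ⟶ B} {f : A ⟶ B}
    (hsq : f' ≫ g = g' ≫ f) (hg' : P.weq g') (hg : P.weq g) : P.IsHPB f' g' g f := by
  obtain ⟨E, τ, q, hτ, hq, hτq⟩ := P.F_fac g
  have hqw : P.weq q := P.weq_of_comp_right hτ (by rwa [hτq])
  obtain ⟨Pt, k₁, k₂, hPt, -⟩ := P.pb_exists q f hq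
  have hk₂ : P.weq k₂ := (P.pb_weq hq hPt).2 hqw
  refine ⟨hsq, E, τ, q, hτ, hq, hτq, Pt, k₁, k₂, hPt,
    hPt.lift (f' ≫ τ) g' (by rw [Category.assoc, hτq, hsq]), ?_,
    hPt.lift_fst _ _ _, hPt.lift_snd _ _ _⟩
  exact P.weq_of_comp_left hk₂ (by rwa [hPt.lift_snd])

lemma exists_weq_of_isPushout_of_cFactorization {A B Cc D Z Q : C}
    {f : A ⟶ B} {g : A ⟶ Cc} {inl : B ⟶ D} {inr : Cc ⟶ D}
    (hD : IsPushout f g inl inr) (hg : P.cofib g)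
    {i : A ⟶ Z} {σ : Z ⟶ B} (hσ : P.weq σ) (hiσ : i ≫ σ = f)
    {inlQ : Z ⟶ Q} {inrQ : Cc ⟶ Q} (hQ : IsPushout i g inlQ inrQ) :
    ∃ w : Q ⟶ D, P.weq w ∧ inlQ ≫ w = σ ≫ inl ∧ inrQ ≫ w = inr := by
  have hw : i ≫ σ ≫ inl = g ≫ inr := by rw [← Category.assoc, hiσ, hD.w]
  refine ⟨hQ.desc (σ ≫ inl) inr hw, ?_, hQ.inl_desc _ _ _, hQ.inr_desc _ _ _⟩
  -- `D` is also the pushout of `σ` along `inlQ`, which is a cofibration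
  have hright : IsPushout σ inlQ inl (hQ.desc (σ ≫ inl) inr hw) :=
    IsPushout.of_left (by rwa [hiσ, hQ.inr_desc]) (hQ.inl_desc _ _ _).symm hQ
  exact (P.po_weq (cofib_of_isPushout hg hQ.flip) hright.flip).1 hσ

lemma isHPO_of_isPushout {A B Cc D : C} {f : A ⟶ B} {g : A ⟶ Cc} {inl : B ⟶ D}
    {inr : Cc ⟶ D} (hD : IsPushout f g inl inr) (hg : P.cofib g) : P.IsHPO f g inl inr := by
  obtain ⟨Z, i, σ, hi, hσ, hiσ⟩ := P.C_fac f
  obtain ⟨Q, inlQ, inrQ, hQ, -⟩ := P.po_exists i g hi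
  obtain ⟨w, hw, hinl, hinr⟩ := exists_weq_of_isPushout_of_cFactorization hD hg hσ hiσ hQ
  exact ⟨hD.w, Z, i, σ, hi, hσ, hiσ, Q, inlQ, inrQ, hQ, w, hw, hinl, hinr⟩

lemma exists_weq_isPullback_comparison {X Y E E₁ E₁' B : C} {q : E ⟶ B} {j : X ⟶ B}
    {d : Y ⟶ B} {fbar : E₁ ⟶ E} {pbar : E₁ ⟶ X} {fbar' : E₁' ⟶ E} {pbar' : E₁' ⟶ Y}
    (hq : P.fib q) (hpb : IsPullback fbar pbar q j) (hpb' : IsPullback fbar' pbar' q d)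
    {β : X ⟶ Y} (hβ : P.weq β) (hβd : β ≫ d = j) :
    ∃ ε : E₁ ⟶ E₁', P.weq ε ∧ ε ≫ fbar' = fbar ∧ ε ≫ pbar' = pbar ≫ β := by
  have hw : fbar ≫ q = (pbar ≫ β) ≫ d := by rw [hpb.w, Category.assoc, hβd]
  have hε : IsPullback (hpb'.lift fbar (pbar ≫ β) hw) pbar pbar' β :=
    IsPullback.of_right (by rwa [hpb'.lift_fst, hβd]) (hpb'.lift_snd _ _ _) hpb'
  exact ⟨_, (P.pb_weq (fib_of_isPullback hq hpb') hε).1 hβ, hpb'.lift_fst _ _ _,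
    hpb'.lift_snd _ _ _⟩

lemma exists_cFactorization_pushforward {A A' Z E : C} {i : A ⟶ Z} {σ : Z ⟶ E}
    {ε : A ⟶ A'} {f : A' ⟶ E} (hi : P.cofib i) (hσ : P.weq σ) (hε : P.weq ε)
    (hfac : i ≫ σ = ε ≫ f) :
    ∃ (Z' : C) (i' : A' ⟶ Z') (σ' : Z' ⟶ E) (z : Z ⟶ Z'), P.cofib i' ∧ P.weq σ' ∧
      i' ≫ σ' = f ∧ P.weq z ∧ i ≫ z = ε ≫ i' ∧ z ≫ σ' = σ := by
  obtain ⟨Z', z, i', hZ', hi'⟩ := P.po_exists i ε hi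
  have hz : P.weq z := (P.po_weq hi hZ').1 hε
  refine ⟨Z', i', hZ'.desc σ f hfac, z, hi', ?_, hZ'.inr_desc _ _ _, hz, hZ'.w,
    hZ'.inl_desc _ _ _⟩
  exact P.weq_of_comp_right hz (by rwa [hZ'.inl_desc])

lemma exists_common_cFactorization {A Z₁ Z₂ E : C} {f : A ⟶ E}
    {i₁ : A ⟶ Z₁} {σ₁ : Z₁ ⟶ E} (hi₁ : P.cofib i₁) (hσ₁ : P.weq σ₁) (hf₁ : i₁ ≫ σ₁ = f)
    {i₂ : A ⟶ Z₂} {σ₂ : Z₂ ⟶ E} (hi₂ : P.cofib i₂) (hσ₂ : P.weq σ₂) (hf₂ : i₂ ≫ σ₂ = f) :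
    ∃ (V : C) (i : A ⟶ V) (σ : V ⟶ E) (c₁ : Z₁ ⟶ V) (c₂ : Z₂ ⟶ V), P.cofib i ∧ P.weq σ ∧
      i ≫ σ = f ∧ P.weq c₁ ∧ P.weq c₂ ∧ i₁ ≫ c₁ = i ∧ i₂ ≫ c₂ = i ∧
      c₁ ≫ σ = σ₁ ∧ c₂ ≫ σ = σ₂ := by
  obtain ⟨S, v₁, v₂, hS, hv₂⟩ := P.po_exists i₁ i₂ hi₁
  obtain ⟨V, c, σ, hc, hσ, hcσ⟩ := P.C_fac (hS.desc σ₁ σ₂ (hf₁.trans hf₂.symm))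
  have hc₁σ : (v₁ ≫ c) ≫ σ = σ₁ := by rw [Category.assoc, hcσ, hS.inl_desc]
  have hc₂σ : (v₂ ≫ c) ≫ σ = σ₂ := by rw [Category.assoc, hcσ, hS.inr_desc]
  refine ⟨V, i₂ ≫ v₂ ≫ c, σ, v₁ ≫ c, v₂ ≫ c, P.cofib_comp hi₂ (P.cofib_comp hv₂ hc), hσ,
    by rw [Category.assoc, hc₂σ, hf₂], P.weq_of_comp_left hσ (by rwa [hc₁σ]),
    P.weq_of_comp_left hσ (by rwa [hc₂σ]), by rw [← Category.assoc, hS.w, Category.assoc],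
    rfl, hc₁σ, hc₂σ⟩

lemma exists_isPushout_desc_of_isPullback {X B E E₁ Z : C} {j : X ⟶ B} {q : E ⟶ B}
    {fbar : E₁ ⟶ E} {pbar : E₁ ⟶ X} (hpb : IsPullback fbar pbar q j)
    {i : E₁ ⟶ Z} {σ : Z ⟶ E} (hi : P.cofib i) (hiσ : i ≫ σ = fbar) :
    ∃ (J : C) (a : X ⟶ J) (b : Z ⟶ J) (j' : J ⟶ B),
      IsPushout pbar i a b ∧ a ≫ j' = j ∧ b ≫ j' = σ ≫ q := by
  obtain ⟨J, b, a, hJ, -⟩ := P.po_exists i pbar hi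
  have hw : pbar ≫ j = i ≫ σ ≫ q := by rw [← hpb.w, ← Category.assoc, hiσ]
  exact ⟨J, a, b, hJ.flip.desc j (σ ≫ q) hw, hJ.flip, hJ.flip.inl_desc _ _ _,
    hJ.flip.inr_desc _ _ _⟩

lemma exists_fib_factorization_baseChange {F F' B B' E : C} {Δ : F ⟶ B} {Δ' : F' ⟶ B'}
    {h : F' ⟶ F} {H : B' ⟶ B} (hh : P.weq h) (hH : P.weq H) (hΔ : h ≫ Δ = Δ' ≫ H)
    {τ : F ⟶ E} {q : E ⟶ B} (hτ : P.weq τ) (hq : P.fib q) (hτq : τ ≫ q = Δ) :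
    ∃ (E' : C) (τ' : F' ⟶ E') (q' : E' ⟶ B') (k : E' ⟶ E), P.weq τ' ∧ P.fib q' ∧
      τ' ≫ q' = Δ' ∧ P.weq k ∧ IsPullback k q' q H := by
  obtain ⟨E', k, q', hE', hq'⟩ := P.pb_exists q H hq
  have hk : P.weq k := (P.pb_weq hq hE').1 hH
  have hw : (h ≫ τ) ≫ q = Δ' ≫ H := by rw [Category.assoc, hτq, hΔ]
  refine ⟨E', hE'.lift (h ≫ τ) Δ' hw, q', k, ?_, hq', hE'.lift_snd _ _ _, hk, hE'⟩
  exact P.weq_of_comp_left hk (by rw [hE'.lift_fst]; exact P.weq_comp hh hτ)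

variable (P) in
def WeqCospan {X X' B : C} (j : X ⟶ B) (j' : X' ⟶ B) : Prop :=
  ∃ (Y : C) (d : Y ⟶ B) (β : X ⟶ Y) (α : X' ⟶ Y),
    P.weq β ∧ P.weq α ∧ β ≫ d = j ∧ α ≫ d = j'

end

end PreJCat

namespace JCat

section

omit [HasZeroObject C] [HasZeroMorphisms C]

variable (J : JCat C)

/-- The Gluing Lemma. -/
lemma exists_weq_isPushout_map {A B Cc D A' B' Cc' D' : C}
    {f : A ⟶ B} {g : A ⟶ Cc} {inl : B ⟶ D} {inr : Cc ⟶ D}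
    (hD : IsPushout f g inl inr) (hg : J.cofib g)
    {f' : A' ⟶ B'} {g' : A' ⟶ Cc'} {inl' : B' ⟶ D'} {inr' : Cc' ⟶ D'}
    (hD' : IsPushout f' g' inl' inr') (hg' : J.cofib g')
    {α : A' ⟶ A} {β : B' ⟶ B} {γ : Cc' ⟶ Cc}
    (hα : J.weq α) (hβ : J.weq β) (hγ : J.weq γ)
    (sq₁ : f' ≫ β = α ≫ f) (sq₂ : g' ≫ γ = α ≫ g) :
    ∃ δ : D' ⟶ D, J.weq δ ∧ inl' ≫ δ = β ≫ inl ∧ inr' ≫ δ = γ ≫ inr := by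
  have hw : f' ≫ β ≫ inl = g' ≫ γ ≫ inr := by
    simp only [← Category.assoc, sq₁, sq₂]
    simp only [Category.assoc, hD.w]
  -- the cube axiom, applied to the cube from the span `B' ← A' → Cc'` to the pushout `D`
  have hHPO : J.IsHPO f' g' (β ≫ inl) (γ ≫ inr) :=
    J.cube hw (J.isHPO_of_isPushout hD hg)
      (PreJCat.isHPB_of_weq sq₁ hα hβ) (PreJCat.isHPB_of_weq sq₂ hα hγ)
      (PreJCat.isHPB_of_weq (Category.comp_id _) hβ (J.weq_id D))
      (PreJCat.isHPB_of_weq (Category.comp_id _) hγ (J.weq_id D))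
  obtain ⟨-, Z, i, σ, -, hσ, hiσ, Q, l, r, hQ, w, hw', hl, hr⟩ := hHPO
  obtain ⟨v, hv, hvl, hvr⟩ :=
    PreJCat.exists_weq_of_isPushout_of_cFactorization hD' hg' hσ hiσ hQ
  have hvδ : v ≫ hD'.desc (β ≫ inl) (γ ≫ inr) hw = w := by
    apply hQ.hom_ext
    · rw [← Category.assoc, hvl, Category.assoc, hD'.inl_desc, hl]
    · rw [← Category.assoc, hvr, hD'.inr_desc, hr]
  exact ⟨_, J.weq_of_comp_right hv (by rwa [hvδ]), hD'.inl_desc _ _ _, hD'.inr_desc _ _ _⟩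

lemma exists_weq_comp_eq_of_isPushout {E₁ X Z D E₁' X' Z' D' B : C}
    {f : E₁ ⟶ X} {g : E₁ ⟶ Z} {inl : X ⟶ D} {inr : Z ⟶ D}
    (hD : IsPushout f g inl inr) (hg : J.cofib g)
    {f' : E₁' ⟶ X'} {g' : E₁' ⟶ Z'} {inl' : X' ⟶ D'} {inr' : Z' ⟶ D'}
    (hD' : IsPushout f' g' inl' inr') (hg' : J.cofib g')
    {α : E₁' ⟶ E₁} {β : X' ⟶ X} {γ : Z' ⟶ Z}
    (hα : J.weq α) (hβ : J.weq β) (hγ : J.weq γ)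
    (sq₁ : f' ≫ β = α ≫ f) (sq₂ : g' ≫ γ = α ≫ g) {d : D ⟶ B} {u : D' ⟶ B}
    (hl : inl' ≫ u = β ≫ inl ≫ d) (hr : inr' ≫ u = γ ≫ inr ≫ d) :
    ∃ δ : D' ⟶ D, J.weq δ ∧ δ ≫ d = u := by
  obtain ⟨δ, hδ, hδl, hδr⟩ := J.exists_weq_isPushout_map hD hg hD' hg' hα hβ hγ sq₁ sq₂
  refine ⟨δ, hδ, hD'.hom_ext ?_ ?_⟩
  · rw [← Category.assoc, hδl, Category.assoc, hl]
  · rw [← Category.assoc, hδr, Category.assoc, hr]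

variable {F F' B B' : C} {Δ : F ⟶ B} {Δ' : F' ⟶ B'} {h : F' ⟶ F} {H : B' ⟶ B}

lemma exists_isJoin_weqCospan (hh : J.weq h) (hH : J.weq H) (hΔ : h ≫ Δ = Δ' ≫ H)
    {X X' S : C} {j : X ⟶ B} {j' : X' ⟶ B'} (hjj' : J.WeqCospan j (j' ≫ H))
    {js : S ⟶ B} (hjs : J.IsJoin j Δ js) :
    ∃ (S' : C) (js' : S' ⟶ B'), J.IsJoin j' Δ' js' ∧ J.WeqCospan js (js' ≫ H) := by
  obtain ⟨Y, d, β, α, hβ, hα, hβd, hαd⟩ := hjj'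
  obtain ⟨E, τ, q, hτ, hq, hτq, E₁, Z, fbar, pbar, i, σ, a, b, hpb, hi, hσ, hiσ, hS, ha, hb⟩ :=
    hjs
  obtain ⟨E', τ', q', k, hτ', hq', hτq', hk, hE'⟩ :=
    PreJCat.exists_fib_factorization_baseChange hh hH hΔ hτ hq hτq
  obtain ⟨E₁', fbar', pbar', hpb', -⟩ := J.pb_exists q' j' hq'
  obtain ⟨Z', i', σ', hi', hσ', hiσ'⟩ := J.C_fac fbar'
  obtain ⟨S', a', b', js', hS', ha', hb'⟩ :=
    PreJCat.exists_isPushout_desc_of_isPullback hpb' hi' hiσ'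
  refine ⟨S', js', ⟨E', τ', q', hτ', hq', hτq', E₁', Z', fbar', pbar', i', σ', a', b',
    hpb', hi', hσ', hiσ', hS', ha', hb'⟩, ?_⟩
  -- both joins are compared with a join of `d` and `Δ`, through a common C-factorization
  obtain ⟨E₁Y, fbarY, pbarY, hpbY, -⟩ := J.pb_exists q d hq
  obtain ⟨ε, hε, hεf, hεp⟩ := PreJCat.exists_weq_isPullback_comparison hq hpb hpbY hβ hβd
  obtain ⟨ε', hε', hεf', hεp'⟩ :=
    PreJCat.exists_weq_isPullback_comparison hq (hpb'.paste_horiz hE') hpbY hα hαd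
  obtain ⟨Z₁, i₁, σ₁, z₁, hi₁, hσ₁, hiσ₁, hz₁, hiz₁, hzσ₁⟩ :=
    PreJCat.exists_cFactorization_pushforward hi hσ hε (hiσ.trans hεf.symm)
  obtain ⟨Z₂, i₂, σ₂, z₂, hi₂, hσ₂, hiσ₂, hz₂, hiz₂, hzσ₂⟩ :=
    PreJCat.exists_cFactorization_pushforward hi' (J.weq_comp hσ' hk) hε'
      (by rw [← Category.assoc, hiσ', hεf'])
  obtain ⟨V, iV, σV, c₁, c₂, hiV, -, hiσV, hc₁, hc₂, hic₁, hic₂, hcσ₁, hcσ₂⟩ :=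
    PreJCat.exists_common_cFactorization hi₁ hσ₁ hiσ₁ hi₂ hσ₂ hiσ₂
  obtain ⟨SY, aY, bY, dY, hSY, haY, hbY⟩ :=
    PreJCat.exists_isPushout_desc_of_isPullback hpbY hiV hiσV
  obtain ⟨βs, hβs, hβsd⟩ := J.exists_weq_comp_eq_of_isPushout hSY hiV hS hi hε hβ
    (J.weq_comp hz₁ hc₁) hεp.symm (by rw [reassoc_of% hiz₁, hic₁])
    (by rw [ha, haY, hβd])
    (by rw [hb, hbY, Category.assoc, reassoc_of% hcσ₁, reassoc_of% hzσ₁])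
  obtain ⟨αs, hαs, hαsd⟩ := J.exists_weq_comp_eq_of_isPushout hSY hiV hS' hi' hε' hα
    (J.weq_comp hz₂ hc₂) hεp'.symm (by rw [reassoc_of% hiz₂, hic₂])
    (by rw [reassoc_of% ha', haY, hαd]) (by rw [reassoc_of% hb', ← hE'.w, hbY,
      Category.assoc, reassoc_of% hcσ₂, reassoc_of% hzσ₂])
  exact ⟨SY, dY, βs, αs, hβs, hαs, hβsd, hαsd⟩

lemma exists_isIterJoin_weqCospan (hh : J.weq h) (hH : J.weq H) (hΔ : h ≫ Δ = Δ' ≫ H)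
    {m : ℕ} {X : C} {j : X ⟶ B} (hj : J.IsIterJoin Δ m j) :
    ∃ (X' : C) (j' : X' ⟶ B'), J.IsIterJoin Δ' m j' ∧ J.WeqCospan j (j' ≫ H) := by
  induction hj with
  | zero => exact ⟨F', Δ', .zero, F, Δ, 𝟙 F, h, J.weq_id F, hh, Category.id_comp Δ, hΔ⟩
  | succ _ hjoin ih =>
    obtain ⟨X', j', hj', hjj'⟩ := ih
    obtain ⟨S', js', hjoin', hcospan⟩ := exists_isJoin_weqCospan J hh hH hΔ hjj' hjoin
    exact ⟨S', js', .succ hj' hjoin', hcospan⟩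

lemma Gsecat_le_of_weq (hc : ∀ X : C, J.CofModel X) (hh : J.weq h) (hH : J.weq H)
    (hΔ : h ≫ Δ = Δ' ≫ H) : J.Gsecat Δ' ≤ J.Gsecat Δ := by
  refine sInf_le_sInf ?_
  rintro n ⟨m, rfl, X, j, hj, hsec⟩
  obtain ⟨X', j', hj', Y, d, β, α, -, hα, rfl, hαd⟩ := J.exists_isIterJoin_weqCospan hh hH hΔ hj
  exact ⟨m, rfl, X', j', hj',
    (PreJCat.HasWeakSection.of_comp hc hsec).of_weq_square hα hH hαd⟩

end

end JCat

lemma isBinProd_iff_isPullback_zero {X Y Q : C} {p₁ : Q ⟶ X} {p₂ : Q ⟶ Y} :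
    IsBinProd p₁ p₂ ↔ IsPullback p₁ p₂ (0 : X ⟶ 0) (0 : Y ⟶ 0) := by
  have hzero : IsTerminal (0 : C) := HasZeroObject.zeroIsTerminal
  refine ⟨fun ⟨hl⟩ => ?_, fun h =>
    ⟨isProductOfIsTerminalIsPullback _ _ _ _ hzero h.isLimit⟩⟩
  convert IsPullback.of_is_product' hl hzero <;> exact hzero.hom_ext _ _

namespace PreJCat

variable {P : PreJCat C}

lemma weq_of_isPullback_zero_map_fst {X X' Y Q Q' : C} (hY : P.EFibrant Y)
    {p₁ : Q ⟶ X} {p₂ : Q ⟶ Y} (hQ : IsPullback p₁ p₂ (0 : X ⟶ 0) (0 : Y ⟶ 0))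
    {p₁' : Q' ⟶ X'} {p₂' : Q' ⟶ Y} (hQ' : IsPullback p₁' p₂' (0 : X' ⟶ 0) (0 : Y ⟶ 0))
    {h : X' ⟶ X} (hh : P.weq h) {H : Q' ⟶ Q} (hH₁ : H ≫ p₁ = p₁' ≫ h) (hH₂ : H ≫ p₂ = p₂') :
    P.weq H := by
  -- `H` is the base change of `h` along the fibration `p₁`
  have hsq : IsPullback H p₁' p₁ h :=
    IsPullback.of_right (by rw [hH₂, comp_zero]; exact hQ'.flip) hH₁ hQ.flip
  exact (P.pb_weq (fib_of_isPullback hY hQ.flip) hsq).1 hh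

lemma weq_of_isPullback_zero_map {X X' Q Q' : C} (hX : P.EFibrant X) (hX' : P.EFibrant X')
    {p₁ p₂ : Q ⟶ X} (hQ : IsPullback p₁ p₂ (0 : X ⟶ 0) (0 : X ⟶ 0))
    {p₁' p₂' : Q' ⟶ X'} (hQ' : IsPullback p₁' p₂' (0 : X' ⟶ 0) (0 : X' ⟶ 0))
    {h : X' ⟶ X} (hh : P.weq h) {H : Q' ⟶ Q} (hH₁ : H ≫ p₁ = p₁' ≫ h)
    (hH₂ : H ≫ p₂ = p₂' ≫ h) : P.weq H := by
  obtain ⟨M, m₁, m₂, hM, -⟩ := P.pb_exists (0 : X ⟶ 0) (0 : X' ⟶ 0) hX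
  -- `H = (h × 𝟙) ≫ (𝟙 × h)` through `M = X × X'`
  have hH : H = hM.lift (p₁' ≫ h) p₂' (by simp) ≫ hQ.lift m₁ (m₂ ≫ h) (by simp) := by
    apply hQ.hom_ext <;> simp [hH₁, hH₂]
  rw [hH]
  exact P.weq_comp
    (weq_of_isPullback_zero_map_fst hX' hM hQ' hh (hM.lift_fst ..) (hM.lift_snd ..))
    (weq_of_isPullback_zero_map_fst hX hQ.flip hM.flip hh (hQ.lift_snd ..) (hQ.lift_fst ..))

variable (P) in
lemma exists_efibrant_replacement (B : C) : ∃ (F : C) (τ : B ⟶ F), P.weq τ ∧ P.EFibrant F := by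
  obtain ⟨F, τ, q, hτ, hq, -⟩ := P.F_fac (0 : B ⟶ 0)
  exact ⟨F, τ, hτ, show P.fib 0 from (isZero_zero C).eq_of_tgt q 0 ▸ hq⟩

lemma exists_weq_of_efibrant_replacements {B F F' : C} (hF : P.EFibrant F)
    (hF' : P.CofModel F') {τ : B ⟶ F} {τ' : B ⟶ F'} (hτ : P.weq τ) (hτ' : P.weq τ') :
    ∃ h : F' ⟶ F, P.weq h := by
  obtain ⟨K, k, k', hK, hk'⟩ := P.pb_exists (0 : F ⟶ 0) (0 : F' ⟶ 0) hF
  obtain ⟨N, w, r, hw, hr, hwr⟩ := P.F_fac (hK.lift τ τ' (by simp))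
  have hrk' : P.weq (r ≫ k') :=
    P.weq_of_comp_right hw (by rwa [← Category.assoc, hwr, hK.lift_snd])
  have hrk : P.weq (r ≫ k) :=
    P.weq_of_comp_right hw (by rwa [← Category.assoc, hwr, hK.lift_fst])
  obtain ⟨s, hs⟩ := hF' (r ≫ k') (P.fib_comp hr hk') hrk'
  have hs' : P.weq s := P.weq_of_comp_left hrk' (by rw [hs]; exact P.weq_id F')
  exact ⟨s ≫ r ≫ k, P.weq_comp hs' hrk⟩

omit [HasZeroObject C] [HasZeroMorphisms C] in
lemma TCE_le_Gsecat {B Pd : C} {p₁ p₂ : Pd ⟶ B} (hP : IsBinProd p₁ p₂) {Δ : B ⟶ Pd}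
    (hΔ : Δ ≫ p₁ = 𝟙 B ∧ Δ ≫ p₂ = 𝟙 B) : P.TCE B ≤ P.Gsecat Δ :=
  iInf₂_le_of_le Pd p₁ <| iInf₂_le_of_le p₂ hP <| iInf₂_le Δ hΔ

end PreJCat

namespace JCat

variable (J : JCat C)

lemma TCE_le_of_weq (hc : ∀ X : C, J.CofModel X) {F F' : C} (hF : J.EFibrant F)
    (hF' : J.EFibrant F') {h : F' ⟶ F} (hh : J.weq h) : J.TCE F' ≤ J.TCE F := by
  refine le_iInf₂ fun Pd p₁ => le_iInf₂ fun p₂ hP => le_iInf₂ fun Δ hΔ => ?_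
  rw [isBinProd_iff_isPullback_zero] at hP
  obtain ⟨Pd', p₁', p₂', hP', -⟩ := J.pb_exists (0 : F' ⟶ 0) (0 : F' ⟶ 0) hF'
  let H : Pd' ⟶ Pd := hP.lift (p₁' ≫ h) (p₂' ≫ h) (by simp)
  have hH : J.weq H := PreJCat.weq_of_isPullback_zero_map hF hF' hP hP' hh
    (hP.lift_fst ..) (hP.lift_snd ..)
  let Δ' : F' ⟶ Pd' := hP'.lift (𝟙 F') (𝟙 F') rfl
  have hΔ' : h ≫ Δ = Δ' ≫ H := by
    apply hP.hom_ext <;> simp [H, Δ', hΔ.1, hΔ.2]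
  calc J.TCE F' ≤ J.Gsecat Δ' :=
        PreJCat.TCE_le_Gsecat (isBinProd_iff_isPullback_zero.2 hP')
          ⟨hP'.lift_fst .., hP'.lift_snd ..⟩
    _ ≤ J.Gsecat Δ := J.Gsecat_le_of_weq hc hh hH hΔ'

lemma TCE_eq_of_efibrant_replacements (hc : ∀ X : C, J.CofModel X) {B F F' : C}
    {τ : B ⟶ F} {τ' : B ⟶ F'} (hτ : J.weq τ) (hF : J.EFibrant F) (hτ' : J.weq τ')
    (hF' : J.EFibrant F') : J.TCE F = J.TCE F' := by
  obtain ⟨h, hh⟩ := PreJCat.exists_weq_of_efibrant_replacements hF (hc F') hτ hτ'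
  obtain ⟨h', hh'⟩ := PreJCat.exists_weq_of_efibrant_replacements hF' (hc F) hτ' hτ
  exact le_antisymm (J.TCE_le_of_weq hc hF' hF hh') (J.TCE_le_of_weq hc hF hF' hh)

lemma TC_eq_TCE (hc : ∀ X : C, J.CofModel X) {B F : C} {τ : B ⟶ F} (hτ : J.weq τ)
    (hF : J.EFibrant F) : J.TC B = J.TCE F :=
  le_antisymm (iInf₂_le_of_le F τ (iInf_le _ ⟨hτ, hF⟩))
    (le_iInf₂ fun _ _ => le_iInf fun hτF =>
      (J.TCE_eq_of_efibrant_replacements hc hτ hF hτF.1 hτF.2).le)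

lemma TC_eq_of_weq (hc : ∀ X : C, J.CofModel X) {B B' : C} {f : B ⟶ B'} (hf : J.weq f) :
    J.TC B = J.TC B' := by
  obtain ⟨F, τ, hτ, hF⟩ := J.exists_efibrant_replacement B'
  rw [J.TC_eq_TCE hc (J.weq_comp hf hτ) hF, J.TC_eq_TCE hc hτ hF]

end JCat

/-- The abstract topological complexity is well-defined:
it does not depend on the choice of e-fibrant replacement, and it is invariant
under weak equivalence of objects. -/
theorem TC_well_defined (J : JCat C)
    (hc : ∀ X : C, J.toPreJCat.CofModel X) :
    (∀ (B F F' : C) (τ : B ⟶ F) (τ' : B ⟶ F'),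
      J.toPreJCat.weq τ → J.toPreJCat.EFibrant F →
      J.toPreJCat.weq τ' → J.toPreJCat.EFibrant F' →
      J.toPreJCat.TCE F = J.toPreJCat.TCE F') ∧
    (∀ B B' : C, J.toPreJCat.WeaklyEquivObj B B' →
      J.toPreJCat.TC B = J.toPreJCat.TC B') := by
  refine ⟨fun _ _ _ _ _ hτ hF hτ' hF' => J.TCE_eq_of_efibrant_replacements hc hτ hF hτ' hF',
    fun _ _ hBB' => ?_⟩
  exact (InvImage.equivalence _ J.TC eq_equivalence).eqvGen_iff.1
    (Relation.EqvGen.mono (fun _ _ ⟨_, hf⟩ => J.TC_eq_of_weq hc hf) _ _ hBB')
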